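/- arXiv:2511.16240 — 3 statements merged into one kernel-verified Lean document; each statement's English description precedes it below -/
import Mathlib

section
/- For real a > 0 and integer k ≥ 1, the integral J_a = ∫_{-π/2}^{π/2} e^{2at} cos^{2k} t dt satisfies J_a > (1/(4a))(e^{a/√k} - 1). -/
open MeasureTheory Real

set_option maxHeartbeats 800000 in
/-- For `a > 0` and `k ≥ 1`, `J_a = ∫_{-π/2}^{π/2} e^{2at} cos^{2k} t dt`
satisfies `J_a > (1/(4a)) (e^{a/√k} - 1)`. -/
theorem stmt_2 (a : ℝ) (ha : 0 < a) (k : ℕ) (hk : 1 ≤ k) :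
    1 / (4 * a) * (Real.exp (a / Real.sqrt k) - 1) <
      ∫ t in (-(π / 2))..(π / 2), Real.exp (2 * a * t) * Real.cos t ^ (2 * k) := by
  have hk1 : (1:ℝ) ≤ k := by exact_mod_cast hk
  have hk0 : (0:ℝ) < k := by linarith
  have hsk1 : (1:ℝ) ≤ Real.sqrt k := by
    rw [show (1:ℝ) = Real.sqrt 1 by simp]
    exact Real.sqrt_le_sqrt hk1
  have hsk0 : (0:ℝ) < Real.sqrt k := lt_of_lt_of_le one_pos hsk1
  have hsq : Real.sqrt k ^ 2 = k := Real.sq_sqrt hk0.le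
  set c : ℝ := 1 / (2 * Real.sqrt k) with hc
  have hc0 : 0 < c := by positivity
  have hcle : c ≤ 1 / 2 := by
    rw [hc]
    apply div_le_div_of_nonneg_left one_pos.le two_pos
    nlinarith
  have hcpi : c ≤ π / 2 := hcle.trans (by linarith [Real.pi_gt_three])
  have hcont : Continuous fun t : ℝ => Real.exp (2 * a * t) * Real.cos t ^ (2 * k) := by
    fun_prop
  have hnonneg : ∀ t : ℝ, 0 ≤ Real.exp (2 * a * t) * Real.cos t ^ (2 * k) := by
    intro t
    have : Real.cos t ^ (2 * k) = (Real.cos t ^ k) ^ 2 := by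
      rw [← pow_mul, mul_comm]
    rw [this]; positivity
  -- pointwise bound on [0, c]
  have hbound : ∀ t ∈ Set.Icc (0:ℝ) c,
      3 / 4 * Real.exp (2 * a * t) ≤ Real.exp (2 * a * t) * Real.cos t ^ (2 * k) := by
    intro t ht
    have ht0 := ht.1
    have htc : t ≤ 1 / (2 * Real.sqrt k) := ht.2
    have h1 : t * (2 * Real.sqrt k) ≤ 1 := (le_div_iff₀ (by positivity)).mp htc
    have h2 : (0:ℝ) ≤ t * (2 * Real.sqrt k) := by positivity
    have h3 : (t * (2 * Real.sqrt k)) ^ 2 ≤ 1 := by nlinarith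
    have htsq : t ^ 2 * (4 * k) ≤ 1 := by nlinarith
    have hcos1 : 1 - 1 / (8 * k) ≤ Real.cos t := by
      have hle := Real.one_sub_sq_div_two_le_cos (x := t)
      have : t ^ 2 / 2 ≤ 1 / (8 * k) := by
        rw [div_le_div_iff₀ two_pos (by positivity)]
        nlinarith
      linarith
    have h8 : (8:ℝ) ≤ 8 * k := by linarith
    have h18 : 1 / (8 * (k:ℝ)) ≤ 1 / 8 :=
      div_le_div_of_nonneg_left one_pos.le (by norm_num) h8
    have hpos : (0:ℝ) ≤ 1 - 1 / (8 * k) := by linarith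
    have hbern : 3 / 4 ≤ (1 - 1 / (8 * (k:ℝ))) ^ (2 * k) := by
      have hB := one_add_mul_le_pow (a := -(1 / (8 * (k:ℝ)))) (n := 2 * k)
        (by linarith)
      have h2' : 1 + (2 * k : ℕ) * -(1 / (8 * (k:ℝ))) = 1 - 1 / 4 := by
        push_cast
        field_simp
        ring
      rw [h2', show (1 + -(1 / (8 * (k:ℝ)))) = 1 - 1 / (8 * k) by ring] at hB
      linarith
    have hcospow : 3 / 4 ≤ Real.cos t ^ (2 * k) :=
      le_trans hbern (pow_le_pow_left₀ hpos hcos1 _)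
    have he : 0 < Real.exp (2 * a * t) := Real.exp_pos _
    nlinarith
  -- value of the lower integral
  have hac : 2 * a * c = a / Real.sqrt k := by
    rw [hc]; field_simp
  have hint_exp : ∫ t in (0:ℝ)..c, 3 / 4 * Real.exp (2 * a * t)
      = 3 / (8 * a) * (Real.exp (a / Real.sqrt k) - 1) := by
    rw [intervalIntegral.integral_const_mul,
      intervalIntegral.integral_comp_mul_left (fun x => Real.exp x)
        (by positivity : 2 * a ≠ 0),
      mul_zero, hac, integral_exp, Real.exp_zero, smul_eq_mul]
    ring
  have hstep1 : ∫ t in (0:ℝ)..c, 3 / 4 * Real.exp (2 * a * t)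
      ≤ ∫ t in (0:ℝ)..c, Real.exp (2 * a * t) * Real.cos t ^ (2 * k) := by
    apply intervalIntegral.integral_mono_on hc0.le
    · exact (Continuous.intervalIntegrable (by fun_prop) _ _)
    · exact hcont.intervalIntegrable _ _
    · exact hbound
  have hstep2 : (∫ t in (0:ℝ)..c, Real.exp (2 * a * t) * Real.cos t ^ (2 * k))
      ≤ ∫ t in (-(π / 2))..(π / 2), Real.exp (2 * a * t) * Real.cos t ^ (2 * k) := by
    apply intervalIntegral.integral_mono_interval (by linarith [Real.pi_pos]) hc0.le hcpi
    · filter_upwards with t using hnonneg t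
    · exact hcont.intervalIntegrable _ _
  have hE : 0 < Real.exp (a / Real.sqrt k) - 1 := by
    have : 1 < Real.exp (a / Real.sqrt k) := by
      rw [show (1:ℝ) = Real.exp 0 by simp]
      exact Real.exp_lt_exp.mpr (by positivity)
    linarith
  have hfinal : 1 / (4 * a) * (Real.exp (a / Real.sqrt k) - 1)
      < 3 / (8 * a) * (Real.exp (a / Real.sqrt k) - 1) := by
    apply mul_lt_mul_of_pos_right _ hE
    rw [div_lt_div_iff₀ (by positivity) (by positivity)]
    nlinarith
  linarith [hint_exp ▸ hstep1, hstep2]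
end

section
/- Let J_a = ∫_{-π/2}^{π/2} e^{2at} cos^{2k} t dt for k ≥ 1 and F(ξ) = ∫_{-∞}^{∞} e^{-2πiξa}/J_a da. Then for ξ ≠ 0, |F(ξ)| ≤ (3/(4ξ²)) F(0). -/
open MeasureTheory Real

/-- `J_a = ∫_{-π/2}^{π/2} e^{2at} cos^{2k} t dt`. -/
noncomputable def J (k : ℕ) (a : ℝ) : ℝ :=
  ∫ t in (-(π / 2))..(π / 2), Real.exp (2 * a * t) * Real.cos t ^ (2 * k)

/-- `F(ξ) = ∫_ℝ e^{-2πiξa}/J_a da`, the Fourier transform of `a ↦ 1/J_a`. -/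
noncomputable def F (k : ℕ) (ξ : ℝ) : ℂ :=
  ∫ a : ℝ, Complex.exp (-2 * π * Complex.I * ξ * a) / (J k a : ℂ)

namespace Stmt4Aux

open Set

/-- Integrand with an extra factor `(2t)^n` (derivatives in `a`). -/
noncomputable def g (k n : ℕ) (a t : ℝ) : ℝ :=
  (2 * t) ^ n * (Real.exp (2 * a * t) * Real.cos t ^ (2 * k))

/-- `n`-th derivative of `J` in `a`, as a set integral over `Ioc`. -/
noncomputable def Jn (k n : ℕ) (a : ℝ) : ℝ :=
  ∫ t in Ioc (-(π / 2)) (π / 2), g k n a t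

lemma g_cont (k n : ℕ) (a : ℝ) : Continuous (fun t => g k n a t) := by
  unfold g; fun_prop

lemma g_intOn (k n : ℕ) (a : ℝ) :
    IntegrableOn (fun t => g k n a t) (Ioc (-(π / 2)) (π / 2)) :=
  (g_cont k n a).integrableOn_Ioc

lemma g0_nonneg (k : ℕ) (a t : ℝ) :
    0 ≤ g k 0 a t := by
  unfold g
  have h1 : 0 ≤ Real.cos t ^ (2 * k) := (even_two_mul k).pow_nonneg _
  positivity

lemma g_abs_le (k n : ℕ) (a : ℝ) {t : ℝ} (ht : t ∈ Ioc (-(π / 2)) (π / 2)) :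
    |g k n a t| ≤ π ^ n * g k 0 a t := by
  have hE : 0 ≤ Real.exp (2 * a * t) * Real.cos t ^ (2 * k) := by
    have h1 : 0 ≤ Real.cos t ^ (2 * k) := (even_two_mul k).pow_nonneg _
    positivity
  have h2t : |2 * t| ≤ π := by
    rw [abs_le]; constructor <;> [linarith [ht.1]; linarith [ht.2]]
  calc |g k n a t| = |2 * t| ^ n * (Real.exp (2 * a * t) * Real.cos t ^ (2 * k)) := by
        unfold g; rw [abs_mul, abs_pow, abs_of_nonneg hE]
    _ ≤ π ^ n * (Real.exp (2 * a * t) * Real.cos t ^ (2 * k)) := by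
        gcongr
    _ = π ^ n * g k 0 a t := by unfold g; ring

lemma J_eq (k : ℕ) (a : ℝ) : J k a = Jn k 0 a := by
  unfold J Jn g
  rw [intervalIntegral.integral_of_le (by linarith [pi_pos] : -(π / 2) ≤ π / 2)]
  simp

lemma hasDeriv (k n : ℕ) (a₀ : ℝ) : HasDerivAt (Jn k n) (Jn k (n + 1) a₀) a₀ := by
  have key := hasDerivAt_integral_of_dominated_loc_of_deriv_le
      (μ := volume.restrict (Ioc (-(π / 2)) (π / 2)))
      (F := fun a t => g k n a t) (F' := fun a t => g k (n + 1) a t) (x₀ := a₀)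
      (bound := fun _ => π ^ (n + 1) * Real.exp ((|a₀| + 1) * π))
      (s := Metric.ball a₀ 1) (Metric.ball_mem_nhds a₀ one_pos)
      (Filter.Eventually.of_forall fun a => (g_cont k n a).aestronglyMeasurable)
      (g_intOn k n a₀)
      ((g_cont k (n + 1) a₀).aestronglyMeasurable)
      ?_ ?_ ?_
  · exact key.2
  · -- bound
    filter_upwards [ae_restrict_mem measurableSet_Ioc] with t ht x hx
    have hE : 0 ≤ Real.cos t ^ (2 * k) := (even_two_mul k).pow_nonneg _
    have h2t : |2 * t| ≤ π := by
      rw [abs_le]; constructor <;> [linarith [ht.1]; linarith [ht.2]]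
    have hxle : |x| ≤ |a₀| + 1 := by
      have hd := Metric.mem_ball.mp hx
      rw [Real.dist_eq] at hd
      have := abs_sub_abs_le_abs_sub x a₀
      linarith
    have htle : |t| ≤ π / 2 := by
      rw [abs_le]; constructor <;> [linarith [ht.1]; linarith [ht.2]]
    have hexp : Real.exp (2 * x * t) ≤ Real.exp ((|a₀| + 1) * π) := by
      apply Real.exp_le_exp.2
      calc 2 * x * t ≤ |2 * x * t| := le_abs_self _
        _ = 2 * |x| * |t| := by rw [abs_mul, abs_mul]; simp [abs_of_nonneg, mul_assoc]
        _ ≤ 2 * (|a₀| + 1) * (π / 2) := by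
            nlinarith [abs_nonneg x, abs_nonneg t, pi_pos]
        _ = (|a₀| + 1) * π := by ring
    have hcos : Real.cos t ^ (2 * k) ≤ 1 := by
      rw [← (even_two_mul k).pow_abs]
      exact pow_le_one₀ (abs_nonneg _) (Real.abs_cos_le_one t)
    have hEc : Real.exp (2 * x * t) * Real.cos t ^ (2 * k) ≤ Real.exp ((|a₀| + 1) * π) := by
      have := mul_le_mul hexp hcos hE (Real.exp_pos _).le
      simpa using this
    calc ‖g k (n + 1) x t‖
        = |g k (n + 1) x t| := Real.norm_eq_abs _
      _ ≤ π ^ (n + 1) * g k 0 x t := g_abs_le k (n + 1) x ht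
      _ ≤ π ^ (n + 1) * Real.exp ((|a₀| + 1) * π) := by
          unfold g
          rw [pow_zero, one_mul]
          exact mul_le_mul_of_nonneg_left hEc (by positivity)
  · -- bound integrable
    exact integrableOn_const measure_Ioc_lt_top.ne
  · -- differentiability
    refine Filter.Eventually.of_forall fun t x _ => ?_
    have hlin : HasDerivAt (fun x : ℝ => 2 * x * t) (2 * t) x := by
      simpa using ((hasDerivAt_id x).const_mul (2 : ℝ)).mul_const t
    have hexp : HasDerivAt (fun x => Real.exp (2 * x * t))
        (Real.exp (2 * x * t) * (2 * t)) x := hlin.exp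
    have h := (hexp.mul_const (Real.cos t ^ (2 * k))).const_mul ((2 * t) ^ n)
    refine h.congr_deriv ?_
    unfold g; ring

lemma Jn_cont (k n : ℕ) : Continuous (Jn k n) :=
  continuous_iff_continuousAt.2 fun a => (hasDeriv k n a).continuousAt

lemma Jn_abs_le (k n : ℕ) (a : ℝ) : |Jn k n a| ≤ π ^ n * Jn k 0 a := by
  unfold Jn
  calc |∫ t in Ioc (-(π / 2)) (π / 2), g k n a t|
      ≤ ∫ t in Ioc (-(π / 2)) (π / 2), |g k n a t| := by
        simpa [Real.norm_eq_abs] using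
          norm_integral_le_integral_norm (μ := volume.restrict (Ioc (-(π / 2)) (π / 2)))
            (fun t => g k n a t)
    _ ≤ ∫ t in Ioc (-(π / 2)) (π / 2), π ^ n * g k 0 a t := by
        apply setIntegral_mono_on ((g_intOn k n a).norm) ((g_intOn k 0 a).const_mul _)
          measurableSet_Ioc
        intro t ht
        exact g_abs_le k n a ht
    _ = π ^ n * Jn k 0 a := by rw [integral_const_mul]; rfl

lemma J_pos (k : ℕ) (a : ℝ) : 0 < J k a := by
  unfold J
  apply intervalIntegral.intervalIntegral_pos_of_pos_on
  · exact (by fun_prop :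
      Continuous fun t => Real.exp (2 * a * t) * Real.cos t ^ (2 * k)).intervalIntegrable _ _
  · intro t ht
    have hc : 0 < Real.cos t := Real.cos_pos_of_mem_Ioo ht
    positivity
  · linarith [pi_pos]

lemma J_hasDeriv (k : ℕ) (a : ℝ) : HasDerivAt (J k) (Jn k 1 a) a := by
  have he : J k = Jn k 0 := funext (J_eq k)
  rw [he]
  exact hasDeriv k 0 a

lemma J_cont (k : ℕ) : Continuous (J k) :=
  continuous_iff_continuousAt.2 fun a => (J_hasDeriv k a).continuousAt

lemma Jn1_abs_le (k : ℕ) (a : ℝ) : |Jn k 1 a| ≤ π * J k a := by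
  have := Jn_abs_le k 1 a
  rw [J_eq]
  simpa using this

lemma Jn2_abs_le (k : ℕ) (a : ℝ) : |Jn k 2 a| ≤ π ^ 2 * J k a := by
  have := Jn_abs_le k 2 a
  rw [J_eq]
  simpa using this

end Stmt4Aux

open Stmt4Aux Set

/-- For `ξ ≠ 0`, `|F(ξ)| ≤ (3/(4ξ²)) F(0)`, where `F(0) = ∫ da/J_a`. -/
theorem stmt_4 (k : ℕ) (hk : 1 ≤ k) (ξ : ℝ) (hξ : ξ ≠ 0) :
    ‖F k ξ‖ ≤ 3 / (4 * ξ ^ 2) * ∫ a : ℝ, 1 / J k a := by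
  have hJpos : ∀ a, 0 < J k a := J_pos k
  set f : ℝ → ℂ := fun a => ((J k a : ℝ) : ℂ)⁻¹ with hf_def
  have hFeq : F k ξ = FourierTransform.fourier f ξ := by
    rw [Real.fourier_real_eq_integral_exp_smul]
    unfold F
    congr 1
    funext a
    rw [smul_eq_mul, div_eq_mul_inv]
    congr 1
    push_cast
    ring_nf
  by_cases hInt : Integrable (fun a : ℝ => 1 / J k a)
  · -- main case
    have hJC : ∀ a, ((J k a : ℝ) : ℂ) ≠ 0 := fun a => by
      exact_mod_cast (hJpos a).ne'
    set f1 : ℝ → ℂ := fun a => -((Jn k 1 a : ℝ) : ℂ) / ((J k a : ℝ) : ℂ) ^ 2 with hf1_def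
    set f2 : ℝ → ℂ :=
      fun a => (((2 * (Jn k 1 a) ^ 2 - Jn k 2 a * J k a) / (J k a) ^ 3 : ℝ) : ℂ) with hf2_def
    have hder1 : ∀ a, HasDerivAt f (f1 a) a := by
      intro a
      rw [hf_def, hf1_def]
      have h := (hasDerivAt_const a (1 : ℂ)).div ((J_hasDeriv k a).ofReal_comp) (hJC a)
      simp only [Pi.div_def, one_div] at h
      refine h.congr_deriv ?_
      ring
    have hder2 : ∀ a, HasDerivAt f1 (f2 a) a := by
      intro a
      rw [hf1_def]
      have hu : HasDerivAt (fun a => -((Jn k 1 a : ℝ) : ℂ)) (-((Jn k 2 a : ℝ) : ℂ)) a :=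
        ((hasDeriv k 1 a).ofReal_comp).neg
      have hv : HasDerivAt (fun a => ((J k a : ℝ) : ℂ) ^ 2)
          (2 * ((J k a : ℝ) : ℂ) * ((Jn k 1 a : ℝ) : ℂ)) a := by
        have h := ((J_hasDeriv k a).ofReal_comp).mul ((J_hasDeriv k a).ofReal_comp)
        have heq : (fun a => ((J k a : ℝ) : ℂ) ^ 2) =
            fun a => ((J k a : ℝ) : ℂ) * ((J k a : ℝ) : ℂ) := by
          funext b; ring
        rw [heq]
        refine h.congr_deriv ?_
        ring
      have h := hu.div hv (pow_ne_zero 2 (hJC a))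
      refine h.congr_deriv ?_
      have hne := hJC a
      rw [hf2_def]
      push_cast
      field_simp
      ring
    -- norm bounds
    have hf1b : ∀ a, ‖f1 a‖ ≤ π * (1 / J k a) := by
      intro a
      have hJ := hJpos a
      rw [hf1_def]
      simp only [norm_div, norm_neg, norm_pow, Complex.norm_real, Real.norm_eq_abs,
        abs_of_pos hJ]
      rw [show π * (1 / J k a) = (π * J k a) / (J k a) ^ 2 by
        field_simp]
      gcongr
      exact Jn1_abs_le k a
    have hf2b : ∀ a, ‖f2 a‖ ≤ 3 * π ^ 2 * (1 / J k a) := by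
      intro a
      have hJ := hJpos a
      have h1 : (Jn k 1 a) ^ 2 ≤ (π * J k a) ^ 2 := by
        rw [← sq_abs]
        apply pow_le_pow_left₀ (abs_nonneg _) (Jn1_abs_le k a)
      have h2 := abs_le.1 (Jn2_abs_le k a)
      have hnum : |2 * (Jn k 1 a) ^ 2 - Jn k 2 a * J k a| ≤ 3 * π ^ 2 * (J k a) ^ 2 := by
        rw [abs_le]
        constructor <;> nlinarith [sq_nonneg (Jn k 1 a), hJ, pi_pos]
      rw [hf2_def]
      simp only [Complex.norm_real, Real.norm_eq_abs]
      rw [abs_div, abs_of_pos (pow_pos hJ 3)]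
      calc |2 * (Jn k 1 a) ^ 2 - Jn k 2 a * J k a| / (J k a) ^ 3
          ≤ (3 * π ^ 2 * (J k a) ^ 2) / (J k a) ^ 3 := by gcongr
        _ = 3 * π ^ 2 * (1 / J k a) := by field_simp
    -- integrability
    have hfInt : Integrable f := by
      rw [hf_def]
      have h := hInt.ofReal (𝕜 := ℂ)
      simp only [one_div] at h
      push_cast at h
      exact h
    have hf1Int : Integrable f1 := by
      refine (hInt.const_mul π).mono' ?_ (Filter.Eventually.of_forall hf1b)
      have hc : Continuous f1 := by
        apply Continuous.div
        · exact (Complex.continuous_ofReal.comp (Jn_cont k 1)).neg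
        · exact (Complex.continuous_ofReal.comp (J_cont k)).pow 2
        · exact fun a => pow_ne_zero _ (hJC a)
      exact hc.aestronglyMeasurable
    have hf2Int : Integrable f2 := by
      refine (hInt.const_mul (3 * π ^ 2)).mono' ?_ (Filter.Eventually.of_forall hf2b)
      have hc : Continuous f2 := by
        apply Complex.continuous_ofReal.comp
        apply Continuous.div
        · exact (continuous_const.mul ((Jn_cont k 1).pow 2)).sub ((Jn_cont k 2).mul (J_cont k))
        · exact (J_cont k).pow 3
        · exact fun a => pow_ne_zero _ (hJpos a).ne'
      exact hc.aestronglyMeasurable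
    have hdf : deriv f = f1 := funext fun a => (hder1 a).deriv
    have hdf1 : deriv f1 = f2 := funext fun a => (hder2 a).deriv
    have hDiff : Differentiable ℝ f := fun a => (hder1 a).differentiableAt
    have hDiff1 : Differentiable ℝ f1 := fun a => (hder2 a).differentiableAt
    have key1 : FourierTransform.fourier f1 =
        fun x : ℝ => (2 * ↑π * Complex.I * ↑x) • FourierTransform.fourier f x := by
      rw [← hdf]
      exact Real.fourier_deriv hfInt hDiff (hdf ▸ hf1Int)
    have key2 : FourierTransform.fourier f2 =
        fun x : ℝ => (2 * ↑π * Complex.I * ↑x) • FourierTransform.fourier f1 x := by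
      rw [← hdf1]
      exact Real.fourier_deriv hf1Int hDiff1 (hdf1 ▸ hf2Int)
    have hval : FourierTransform.fourier f2 ξ =
        ((2 * ↑π * Complex.I * ↑ξ) ^ 2) * FourierTransform.fourier f ξ := by
      rw [key2]
      simp only [key1, smul_eq_mul]
      ring
    have hnormc : ‖((2 * (π : ℂ) * Complex.I * (ξ : ℂ)) ^ 2)‖ = 4 * π ^ 2 * ξ ^ 2 := by
      rw [norm_pow]
      have h1 : ‖(2 * (π : ℂ) * Complex.I * (ξ : ℂ))‖ = 2 * π * |ξ| := by
        simp only [norm_mul, Complex.norm_I, Complex.norm_real, Real.norm_eq_abs,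
          Complex.norm_ofNat, abs_of_pos pi_pos]
        ring
      rw [h1]
      rw [mul_pow, mul_pow, sq_abs]
      ring
    have hnorm2 : ‖FourierTransform.fourier f2 ξ‖ ≤ 3 * π ^ 2 * ∫ a : ℝ, 1 / J k a := by
      calc ‖FourierTransform.fourier f2 ξ‖ ≤ ∫ a : ℝ, ‖f2 a‖ :=
            VectorFourier.norm_fourierIntegral_le_integral_norm _ _ _ _ _
        _ ≤ ∫ a : ℝ, 3 * π ^ 2 * (1 / J k a) :=
            integral_mono hf2Int.norm (hInt.const_mul _) hf2b
        _ = 3 * π ^ 2 * ∫ a : ℝ, 1 / J k a := integral_const_mul _ _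
    have hmain : 4 * π ^ 2 * ξ ^ 2 * ‖FourierTransform.fourier f ξ‖ ≤
        3 * π ^ 2 * ∫ a : ℝ, 1 / J k a := by
      calc 4 * π ^ 2 * ξ ^ 2 * ‖FourierTransform.fourier f ξ‖
          = ‖FourierTransform.fourier f2 ξ‖ := by rw [hval, norm_mul, hnormc]
        _ ≤ 3 * π ^ 2 * ∫ a : ℝ, 1 / J k a := hnorm2
    rw [hFeq]
    have h4 : (0 : ℝ) < 4 * π ^ 2 * ξ ^ 2 := by positivity
    rw [show (3 : ℝ) / (4 * ξ ^ 2) * (∫ a : ℝ, 1 / J k a) =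
        (3 * π ^ 2 * ∫ a : ℝ, 1 / J k a) / (4 * π ^ 2 * ξ ^ 2) by
      rw [div_mul_eq_mul_div, eq_div_iff h4.ne']
      field_simp]
    rw [le_div_iff₀ h4]
    nlinarith [hmain, norm_nonneg (FourierTransform.fourier f ξ)]
  · -- non-integrable case: both sides are zero
    have hnormeq : ∀ a : ℝ,
        ‖Complex.exp (-2 * ↑π * Complex.I * ↑ξ * ↑a) / ((J k a : ℝ) : ℂ)‖ = 1 / J k a := by
      intro a
      have hre : (-2 * (π : ℂ) * Complex.I * (ξ : ℂ) * (a : ℂ)) =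
          (((-2 * π * ξ * a : ℝ)) : ℂ) * Complex.I := by
        push_cast
        ring
      rw [norm_div, hre]
      simp only [Complex.norm_exp_ofReal_mul_I, Complex.norm_real, Real.norm_eq_abs,
        abs_of_pos (hJpos a), one_div]
    have hFne : ¬ Integrable
        (fun a : ℝ => Complex.exp (-2 * ↑π * Complex.I * ↑ξ * ↑a) / ((J k a : ℝ) : ℂ)) := by
      intro h
      have := h.norm
      rw [show (fun a : ℝ =>
          ‖Complex.exp (-2 * ↑π * Complex.I * ↑ξ * ↑a) / ((J k a : ℝ) : ℂ)‖) =
          fun a : ℝ => 1 / J k a from funext hnormeq] at this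
      exact (hInt this).elim
    unfold F
    rw [integral_undef hFne, integral_undef hInt]
    simp
end

section
/- The function a ↦ log J_a, where J_a = ∫_{-π/2}^{π/2} e^{2at} cos^{2k} t dt, is strictly convex on ℝ, and its derivative tends to π as a → +∞ and to -π as a → -∞. -/
open MeasureTheory Real Filter

namespace Stmt6Aux

noncomputable def g (k : ℕ) (a t : ℝ) : ℝ := Real.exp (2 * a * t) * Real.cos t ^ (2 * k)

noncomputable def J1 (k : ℕ) (a : ℝ) : ℝ :=
  ∫ t in (-(π / 2))..(π / 2), (2 * t) * g k a t

noncomputable def J2 (k : ℕ) (a : ℝ) : ℝ :=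
  ∫ t in (-(π / 2))..(π / 2), (2 * t) ^ 2 * g k a t

lemma g_cont (k : ℕ) (a : ℝ) : Continuous (g k a) := by
  unfold g; fun_prop

lemma g_nonneg (k : ℕ) (a t : ℝ) : 0 ≤ g k a t :=
  mul_nonneg (exp_pos _).le ((even_two_mul k).pow_nonneg _)

lemma g_pos {k : ℕ} {a t : ℝ} (ht : t ∈ Set.Ioo (-(π / 2)) (π / 2)) : 0 < g k a t :=
  mul_pos (exp_pos _) (pow_pos (Real.cos_pos_of_mem_Ioo ht) _)

lemma intg (k : ℕ) (a : ℝ) {φ : ℝ → ℝ} (hφ : Continuous φ) (c d : ℝ) :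
    IntervalIntegrable (fun t => φ t * g k a t) volume c d :=
  ((hφ.mul (g_cont k a)).intervalIntegrable _ _)

lemma Jg (k : ℕ) (a : ℝ) : J k a = ∫ t in (-(π / 2))..(π / 2), g k a t := rfl

lemma pi2 : -(π / 2) < π / 2 := by linarith [pi_pos]

lemma J_pos (k : ℕ) (a : ℝ) : 0 < J k a :=
  intervalIntegral.intervalIntegral_pos_of_pos_on ((g_cont k a).intervalIntegrable _ _)
    (fun _ ht => g_pos ht) pi2

lemma hasDerivAt_g (k : ℕ) (t x : ℝ) :
    HasDerivAt (fun a => g k a t) (2 * t * g k x t) x := by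
  have h1 : HasDerivAt (fun a : ℝ => 2 * a * t) (2 * t) x := by
    simpa using ((hasDerivAt_id x).const_mul 2).mul_const t
  have h2 := (h1.exp).mul_const (Real.cos t ^ (2 * k))
  unfold g
  exact h2.congr_deriv (by ring)

/-- Differentiation under the integral sign for integrals of the form `∫ φ t * g k x t`. -/
lemma hasDerivAt_Jaux (k : ℕ) {φ : ℝ → ℝ} (hφ : Continuous φ) {M : ℝ}
    (hM : ∀ t ∈ Set.uIoc (-(π / 2)) (π / 2), |φ t| ≤ M) (a : ℝ) :
    HasDerivAt (fun x => ∫ t in (-(π / 2))..(π / 2), φ t * g k x t)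
      (∫ t in (-(π / 2))..(π / 2), φ t * (2 * t * g k a t)) a := by
  have key := intervalIntegral.hasDerivAt_integral_of_dominated_loc_of_deriv_le
    (F := fun x t => φ t * g k x t) (F' := fun x t => φ t * (2 * t * g k x t))
    (x₀ := a) (a := -(π / 2)) (b := π / 2) (μ := volume)
    (bound := fun _ => M * (π * Real.exp ((|a| + 1) * π))) (s := Metric.ball a 1) (Metric.ball_mem_nhds a one_pos)
    ?_ ?_ ?_ ?_ ?_ ?_
  · exact key.2
  · exact Eventually.of_forall fun x => ((hφ.mul (g_cont k x)).aestronglyMeasurable)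
  · exact intg k a hφ _ _
  · exact (hφ.mul ((continuous_const.mul continuous_id').mul (g_cont k a))).aestronglyMeasurable
  · refine Eventually.of_forall fun t ht x hx => ?_
    rw [Set.uIoc_of_le pi2.le] at ht
    have ht' : |t| ≤ π / 2 := abs_le.2 ⟨by linarith [ht.1], ht.2⟩
    have hx' : |x| ≤ |a| + 1 := by
      have := abs_sub_abs_le_abs_sub x a
      have h2 : |x - a| ≤ 1 := by
        have := mem_ball_iff_norm.1 hx
        simpa [Real.norm_eq_abs] using this.le
      linarith
    have hcos : Real.cos t ^ (2 * k) ≤ 1 := by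
      rw [pow_mul]
      apply pow_le_one₀ (sq_nonneg _)
      nlinarith [Real.cos_le_one t, Real.neg_one_le_cos t]
    have hexp : Real.exp (2 * x * t) ≤ Real.exp ((|a| + 1) * π) := by
      apply Real.exp_le_exp.2
      calc 2 * x * t ≤ |2 * x * t| := le_abs_self _
        _ = 2 * |x| * |t| := by rw [abs_mul, abs_mul]; simp [abs_of_nonneg]
        _ ≤ 2 * (|a| + 1) * (π / 2) := by
            apply mul_le_mul (by nlinarith [abs_nonneg x]) ht' (abs_nonneg t)
            positivity
        _ = (|a| + 1) * π := by ring
    have hg : g k x t ≤ Real.exp ((|a| + 1) * π) := by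
      unfold g
      calc Real.exp (2 * x * t) * Real.cos t ^ (2 * k)
          ≤ Real.exp ((|a| + 1) * π) * 1 :=
            mul_le_mul hexp hcos ((even_two_mul k).pow_nonneg _) (exp_pos _).le
        _ = _ := mul_one _
    have habs : ‖φ t * (2 * t * g k x t)‖ = |φ t| * (|2 * t| * g k x t) := by
      rw [Real.norm_eq_abs, abs_mul, abs_mul, abs_of_nonneg (g_nonneg k x t)]
    rw [habs]
    have hMt : (0:ℝ) ≤ M := le_trans (abs_nonneg _) (hM t (by rwa [Set.uIoc_of_le pi2.le]))
    have h2t : |2 * t| ≤ π := by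
      rw [abs_mul]
      have h2 : |(2:ℝ)| = 2 := by norm_num
      rw [h2]; linarith
    have hfinal : |2 * t| * g k x t ≤ π * Real.exp ((|a| + 1) * π) :=
      mul_le_mul h2t hg (g_nonneg k x t) pi_pos.le
    exact mul_le_mul (hM t (by rwa [Set.uIoc_of_le pi2.le])) hfinal
      (mul_nonneg (abs_nonneg _) (g_nonneg k x t)) hMt
  · exact intervalIntegrable_const
  · exact Eventually.of_forall fun t _ x _ => (hasDerivAt_g k t x).const_mul (φ t)

lemma hasDerivAt_J (k : ℕ) (a : ℝ) : HasDerivAt (J k) (J1 k a) a := by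
  have h := hasDerivAt_Jaux k (φ := fun _ => (1:ℝ)) continuous_const
    (M := 1) (fun t _ => by norm_num) a
  simp only [one_mul] at h
  exact h

lemma hasDerivAt_J1 (k : ℕ) (a : ℝ) : HasDerivAt (J1 k) (J2 k a) a := by
  have h := hasDerivAt_Jaux k (φ := fun t => 2 * t) (by fun_prop)
    (M := π) (fun t ht => by
      rw [Set.uIoc_of_le pi2.le] at ht
      rw [abs_mul]
      calc |(2:ℝ)| * |t| = 2 * |t| := by norm_num
        _ ≤ 2 * (π / 2) := by
            have : |t| ≤ π / 2 := abs_le.2 ⟨by linarith [ht.1], ht.2⟩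
            linarith
        _ = π := by ring) a
  refine h.congr_deriv ?_
  unfold J2
  apply intervalIntegral.integral_congr
  intro t _
  ring

lemma quad_pos (k : ℕ) (a c : ℝ) : 0 < J2 k a - 2 * c * J1 k a + c ^ 2 * J k a := by
  have hpos : (0:ℝ) < ∫ t in (-(π / 2))..(π / 2), (2 * t - c) ^ 2 * g k a t := by
    apply intervalIntegral.integral_pos pi2
    · exact (((continuous_const.mul continuous_id').sub continuous_const).pow 2).continuousOn.mul
        (g_cont k a).continuousOn
    · exact fun x _ => mul_nonneg (sq_nonneg _) (g_nonneg k a x)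
    · have hpi : (1:ℝ) < π / 2 := by linarith [pi_gt_three]
      by_cases hc : c = 0
      · refine ⟨1, ⟨by linarith, hpi.le⟩, ?_⟩
        have : (0:ℝ) < g k a 1 := g_pos ⟨by linarith, hpi⟩
        subst hc; nlinarith
      · refine ⟨0, ⟨by linarith, by linarith⟩, ?_⟩
        have : (0:ℝ) < g k a 0 := g_pos ⟨by linarith, by linarith⟩
        have hc2 : 0 < c ^ 2 := by positivity
        nlinarith
  have heq : (∫ t in (-(π / 2))..(π / 2), (2 * t - c) ^ 2 * g k a t)
      = J2 k a - 2 * c * J1 k a + c ^ 2 * J k a := by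
    have hfun : (fun t => (2 * t - c) ^ 2 * g k a t)
        = fun t => ((2 * t) ^ 2 * g k a t - (2 * c) * ((2 * t) * g k a t))
            + c ^ 2 * g k a t := by
      funext t; ring
    have i1 : IntervalIntegrable (fun t => (2 * t) ^ 2 * g k a t) volume (-(π / 2)) (π / 2) :=
      intg k a (φ := fun t => (2 * t) ^ 2) (by fun_prop) _ _
    have i2 : IntervalIntegrable (fun t => 2 * t * g k a t) volume (-(π / 2)) (π / 2) :=
      intg k a (φ := fun t => 2 * t) (by fun_prop) _ _
    have i3 : IntervalIntegrable (g k a) volume (-(π / 2)) (π / 2) :=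
      (g_cont k a).intervalIntegrable _ _
    rw [hfun, intervalIntegral.integral_add (i1.sub (i2.const_mul (2 * c)))
        (i3.const_mul (c ^ 2)),
      intervalIntegral.integral_sub i1 (i2.const_mul (2 * c)),
      intervalIntegral.integral_const_mul, intervalIntegral.integral_const_mul]
    rw [Jg]
    unfold J1 J2
    ring
  linarith [heq ▸ hpos]

lemma CS (k : ℕ) (a : ℝ) : J1 k a ^ 2 < J2 k a * J k a := by
  have h := quad_pos k a (J1 k a / J k a)
  have hJ := J_pos k a
  have hJ' : J k a ≠ 0 := hJ.ne'
  field_simp at h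
  nlinarith [h, hJ]

lemma deriv_logJ (k : ℕ) :
    (deriv fun a => Real.log (J k a)) = fun a => J1 k a / J k a :=
  funext fun a => ((hasDerivAt_J k a).log (J_pos k a).ne').deriv

lemma strict_convex (k : ℕ) : StrictConvexOn ℝ Set.univ (fun a => Real.log (J k a)) := by
  apply strictConvexOn_of_deriv2_pos convex_univ
  · apply Continuous.continuousOn
    apply continuous_iff_continuousAt.2
    intro a
    exact (((hasDerivAt_J k a).log (J_pos k a).ne')).differentiableAt.continuousAt
  · intro x _
    have h2 : deriv^[2] (fun a => Real.log (J k a)) x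
        = deriv (deriv fun a => Real.log (J k a)) x := by
      rw [Function.iterate_succ_apply', Function.iterate_one]
    rw [h2, deriv_logJ]
    have hd : HasDerivAt (fun a => J1 k a / J k a)
        ((J2 k x * J k x - J1 k x * J1 k x) / (J k x) ^ 2) x :=
      (hasDerivAt_J1 k x).div (hasDerivAt_J k x) (J_pos k x).ne'
    rw [hd.deriv]
    have := CS k x
    have hJ := J_pos k x
    apply div_pos (by nlinarith) (by positivity)

lemma numer_eq (k : ℕ) (a : ℝ) :
    π * J k a - J1 k a = ∫ t in (-(π / 2))..(π / 2), (π - 2 * t) * g k a t := by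
  have hfun : (fun t => (π - 2 * t) * g k a t)
      = fun t => π * g k a t - (2 * t) * g k a t := by funext t; ring
  rw [hfun, intervalIntegral.integral_sub (intg k a continuous_const _ _)
      (intg k a (by fun_prop) _ _), intervalIntegral.integral_const_mul]
  rw [Jg]; unfold J1; ring

lemma R_lt_pi (k : ℕ) (a : ℝ) : J1 k a / J k a < π := by
  have hnum : 0 < π * J k a - J1 k a := by
    rw [numer_eq]
    apply intervalIntegral.intervalIntegral_pos_of_pos_on
      (intg k a (by fun_prop) _ _)
      (fun t ht => mul_pos (by linarith [ht.2]) (g_pos ht)) pi2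
  rw [div_lt_iff₀ (J_pos k a)]
  linarith

noncomputable def Kc (k : ℕ) (δ : ℝ) : ℝ := 8 * π ^ 2 / (δ * Real.cos (π / 2 - δ / 4) ^ (2 * k))

lemma key (k : ℕ) {δ : ℝ} (hδ : 0 < δ) (hδ1 : δ ≤ 1) {a : ℝ} (ha : 0 ≤ a) :
    π * J k a - J1 k a ≤ (2 * δ + Kc k δ * Real.exp (-(δ / 2) * a)) * J k a := by
  have hπ : (3:ℝ) < π := pi_gt_three
  set c0 : ℝ := π / 2 - δ with hc0
  set c1 : ℝ := π / 2 - δ / 2 with hc1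
  set c2 : ℝ := π / 2 - δ / 4 with hc2
  have hc2pos : 0 < c2 := by rw [hc2]; linarith
  have hcos2 : 0 < Real.cos c2 := Real.cos_pos_of_mem_Ioo ⟨by rw [hc2]; linarith, by rw [hc2]; linarith⟩
  set C : ℝ := Real.cos c2 ^ (2 * k) with hC
  have hCpos : 0 < C := pow_pos hcos2 _
  have hJ := J_pos k a
  -- split the numerator
  have hsplit : π * J k a - J1 k a
      = (∫ t in (-(π / 2))..c0, (π - 2 * t) * g k a t)
        + ∫ t in c0..(π / 2), (π - 2 * t) * g k a t := by
    rw [numer_eq,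
      ← intervalIntegral.integral_add_adjacent_intervals
        (intg k a (by fun_prop) _ _) (intg k a (by fun_prop) _ _)]
  -- bound on the first piece
  have hT1 : (∫ t in (-(π / 2))..c0, (π - 2 * t) * g k a t)
      ≤ 2 * π ^ 2 * Real.exp (2 * a * c0) := by
    have hb : ∀ t ∈ Set.Icc (-(π / 2)) c0,
        (π - 2 * t) * g k a t ≤ 2 * π * Real.exp (2 * a * c0) := by
      intro t ht
      have h1 : π - 2 * t ≤ 2 * π := by have := ht.1; linarith
      have hcosn : 0 ≤ Real.cos t := Real.cos_nonneg_of_mem_Icc ⟨ht.1, by have := ht.2; rw [hc0] at this; linarith⟩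
      have hcos1 : Real.cos t ^ (2 * k) ≤ 1 := pow_le_one₀ hcosn (Real.cos_le_one t)
      have hg : g k a t ≤ Real.exp (2 * a * c0) := by
        unfold g
        calc Real.exp (2 * a * t) * Real.cos t ^ (2 * k)
            ≤ Real.exp (2 * a * c0) * 1 := by
              apply mul_le_mul _ hcos1 ((even_two_mul k).pow_nonneg _) (exp_pos _).le
              exact Real.exp_le_exp.2 (by nlinarith [ht.2])
          _ = _ := mul_one _
      calc (π - 2 * t) * g k a t ≤ (2 * π) * Real.exp (2 * a * c0) :=
            mul_le_mul h1 hg (g_nonneg k a t) (by positivity)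
        _ = 2 * π * Real.exp (2 * a * c0) := by ring
    calc (∫ t in (-(π / 2))..c0, (π - 2 * t) * g k a t)
        ≤ ∫ _ in (-(π / 2))..c0, 2 * π * Real.exp (2 * a * c0) :=
          intervalIntegral.integral_mono_on (by rw [hc0]; linarith)
            (intg k a (by fun_prop) _ _) intervalIntegrable_const hb
      _ = (c0 - (-(π / 2))) * (2 * π * Real.exp (2 * a * c0)) := by
          rw [intervalIntegral.integral_const, smul_eq_mul]
      _ ≤ π * (2 * π * Real.exp (2 * a * c0)) := by
          apply mul_le_mul_of_nonneg_right _ (by positivity)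
          rw [hc0]; linarith
      _ = 2 * π ^ 2 * Real.exp (2 * a * c0) := by ring
  -- bound on the second piece
  have hT2 : (∫ t in c0..(π / 2), (π - 2 * t) * g k a t) ≤ 2 * δ * J k a := by
    have step1 : (∫ t in c0..(π / 2), (π - 2 * t) * g k a t)
        ≤ ∫ t in c0..(π / 2), 2 * δ * g k a t := by
      apply intervalIntegral.integral_mono_on (by rw [hc0]; linarith)
        (intg k a (by fun_prop) _ _) (intg k a continuous_const _ _)
      intro t ht
      apply mul_le_mul_of_nonneg_right _ (g_nonneg k a t)
      have := ht.1; rw [hc0] at this; linarith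
    have step2 : (∫ t in c0..(π / 2), 2 * δ * g k a t) ≤ 2 * δ * J k a := by
      rw [intervalIntegral.integral_const_mul, Jg]
      apply mul_le_mul_of_nonneg_left _ (by positivity)
      apply intervalIntegral.integral_mono_interval (by rw [hc0]; linarith)
        (by rw [hc0]; linarith) le_rfl
        (Eventually.of_forall fun t => g_nonneg k a t)
        ((g_cont k a).intervalIntegrable _ _)
    linarith
  -- lower bound on J
  have hJlb : δ / 4 * (Real.exp (2 * a * c1) * C) ≤ J k a := by
    have step1 : (∫ _ in c1..c2, Real.exp (2 * a * c1) * C) ≤ ∫ t in c1..c2, g k a t := by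
      apply intervalIntegral.integral_mono_on (by rw [hc1, hc2]; linarith)
        intervalIntegrable_const ((g_cont k a).intervalIntegrable _ _)
      intro t ht
      unfold g
      apply mul_le_mul
      · exact Real.exp_le_exp.2 (by nlinarith [ht.1])
      · rw [hC]
        apply pow_le_pow_left₀ hcos2.le
        apply Real.cos_le_cos_of_nonneg_of_le_pi _ (by rw [hc2]; linarith) ht.2
        have := ht.1; rw [hc1] at this; linarith
      · exact pow_nonneg hcos2.le _
      · exact (exp_pos _).le
    have step2 : (∫ t in c1..c2, g k a t) ≤ J k a := by
      rw [Jg]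
      apply intervalIntegral.integral_mono_interval (by rw [hc1]; linarith)
        (by rw [hc1, hc2]; linarith) (by rw [hc2]; linarith)
        (Eventually.of_forall fun t => g_nonneg k a t)
        ((g_cont k a).intervalIntegrable _ _)
    have heq : (∫ _ in c1..c2, Real.exp (2 * a * c1) * C)
        = δ / 4 * (Real.exp (2 * a * c1) * C) := by
      rw [intervalIntegral.integral_const, smul_eq_mul, hc1, hc2]
      ring_nf
    linarith [heq ▸ step1]
  -- the exponential comparison
  have hKC : Kc k δ * (δ / 4 * C) = 2 * π ^ 2 := by
    have hKc : Kc k δ = 8 * π ^ 2 / (δ * C) := by rw [Kc, hC, hc2]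
    rw [hKc, div_mul_eq_mul_div, div_eq_iff (show δ * C ≠ 0 from (by positivity : (0:ℝ) < δ * C).ne')]
    ring
  have hexpcmp : Real.exp (2 * a * c0) ≤ Real.exp (-(δ / 2) * a) * Real.exp (2 * a * c1) := by
    rw [← Real.exp_add]
    apply Real.exp_le_exp.2
    rw [hc0, hc1]
    nlinarith [mul_nonneg hδ.le ha]
  have hT1' : 2 * π ^ 2 * Real.exp (2 * a * c0)
      ≤ Kc k δ * Real.exp (-(δ / 2) * a) * J k a := by
    calc 2 * π ^ 2 * Real.exp (2 * a * c0)
        ≤ 2 * π ^ 2 * (Real.exp (-(δ / 2) * a) * Real.exp (2 * a * c1)) := by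
          apply mul_le_mul_of_nonneg_left hexpcmp (by positivity)
      _ = Kc k δ * Real.exp (-(δ / 2) * a) * (δ / 4 * (Real.exp (2 * a * c1) * C)) := by
          rw [show Kc k δ * Real.exp (-(δ / 2) * a) * (δ / 4 * (Real.exp (2 * a * c1) * C))
              = (Kc k δ * (δ / 4 * C)) * (Real.exp (-(δ / 2) * a) * Real.exp (2 * a * c1))
              from by ring, hKC]
      _ ≤ Kc k δ * Real.exp (-(δ / 2) * a) * J k a := by
          apply mul_le_mul_of_nonneg_left hJlb
          have : 0 < Kc k δ := by rw [Kc]; positivity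
          positivity
  rw [hsplit]
  have : (2 * δ + Kc k δ * Real.exp (-(δ / 2) * a)) * J k a
      = 2 * δ * J k a + Kc k δ * Real.exp (-(δ / 2) * a) * J k a := by ring
  rw [this]
  linarith

lemma tendsto_R_atTop (k : ℕ) : Tendsto (fun a => J1 k a / J k a) atTop (nhds π) := by
  rw [tendsto_order]
  constructor
  · intro c hc
    set δ : ℝ := min ((π - c) / 4) 1 with hδdef
    have hδ : 0 < δ := lt_min (by linarith) one_pos
    have hδ1 : δ ≤ 1 := min_le_right _ _
    have hδc : δ ≤ (π - c) / 4 := min_le_left _ _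
    have hK : Tendsto (fun a : ℝ => Kc k δ * Real.exp (-(δ / 2) * a)) atTop (nhds 0) := by
      have h1 : Tendsto (fun a : ℝ => -(δ / 2) * a) atTop atBot :=
        Tendsto.const_mul_atTop_of_neg (by linarith) tendsto_id
      have h3 : Tendsto (fun a : ℝ => Real.exp (-(δ / 2) * a)) atTop (nhds 0) :=
        Real.tendsto_exp_atBot.comp h1
      simpa using h3.const_mul (Kc k δ)
    have hev : ∀ᶠ a in atTop, Kc k δ * Real.exp (-(δ / 2) * a) < δ :=
      hK.eventually_lt_const hδ
    filter_upwards [hev, eventually_ge_atTop (0:ℝ)] with a h1 h2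
    have hkey := key k hδ hδ1 h2
    have hJ := J_pos k a
    rw [lt_div_iff₀ hJ]
    have h4 : π * J k a - J1 k a ≤ 3 * δ * J k a := by
      have : (2 * δ + Kc k δ * Real.exp (-(δ / 2) * a)) * J k a ≤ 3 * δ * J k a := by
        apply mul_le_mul_of_nonneg_right (by linarith) hJ.le
      linarith
    nlinarith [mul_pos (show (0:ℝ) < π - 3 * δ - c by linarith) hJ]
  · intro c hc
    exact Eventually.of_forall fun a => lt_trans (R_lt_pi k a) hc

lemma J_even (k : ℕ) (a : ℝ) : J k (-a) = J k a := by
  have h := intervalIntegral.integral_comp_neg (a := -(π / 2)) (b := π / 2)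
      (f := fun t => Real.exp (2 * a * t) * Real.cos t ^ (2 * k))
  rw [neg_neg] at h
  unfold J
  rw [← h]
  apply intervalIntegral.integral_congr
  intro t _
  simp only [Real.cos_neg]
  rw [show 2 * -a * t = 2 * a * -t by ring]

end Stmt6Aux

open Stmt6Aux in
/-- `a ↦ log J_a` is strictly convex on `ℝ`, and its derivative tends to `π` at
`+∞` and to `-π` at `-∞`. -/
theorem stmt_6 (k : ℕ) (hk : 1 ≤ k) :
    StrictConvexOn ℝ Set.univ (fun a => Real.log (J k a)) ∧
      Tendsto (deriv fun a => Real.log (J k a)) atTop (nhds π) ∧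
      Tendsto (deriv fun a => Real.log (J k a)) atBot (nhds (-π)) := by
  have hTop : Tendsto (deriv fun a => Real.log (J k a)) atTop (nhds π) := by
    rw [deriv_logJ]
    exact tendsto_R_atTop k
  refine ⟨strict_convex k, hTop, ?_⟩
  have hodd : ∀ x : ℝ, (deriv fun a => Real.log (J k a)) x
      = -((deriv fun a => Real.log (J k a)) (-x)) := by
    intro x
    have hLeven : (fun a => Real.log (J k a)) = fun a => Real.log (J k (-a)) := by
      funext y; rw [J_even]
    conv_lhs => rw [hLeven]
    exact deriv_comp_neg (f := fun a => Real.log (J k a)) (x := x)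
  have h1 : Tendsto (fun x : ℝ => -((deriv fun a => Real.log (J k a)) (-x))) atBot
      (nhds (-π)) := by
    exact ((hTop.comp tendsto_neg_atBot_atTop).neg)
  exact h1.congr fun x => (hodd x).symm
end
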